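/- With the setup of the perturbed eigen-decomposition and assuming all $\widetilde\lambda_j - \lambda_{r+i} \neq 0$, one has $V_2^* \widetilde X_1 = F \circ (V_2^* \Delta A \widetilde X_1)$ where $F_{ij} = (\widetilde\lambda_j - \lambda_{r+i})^{-1}$. Consequently, writing $QR$ decompositions $V_2 = Q_{V_2} R_{V_2}$ and $\widetilde X_1 = Q_{\widetilde X_1} R_{\widetilde X_1}$, it holds that $Q_{V_2}^* Q_{\widetilde X_1} = (R_{V_2}^{-1})^* (F \circ (V_2^* \Delta A \widetilde X_1)) R_{\widetilde X_1}^{-1}$. -/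
import Mathlib


open Matrix
open scoped Matrix  -- for the Hadamard product notation `⊙`

/-- with the perturbed eigen-decomposition setup and all
`λ̃ⱼ - λ_{r+i} ≠ 0`, one has `V₂ᴴ X̃₁ = F ∘ (V₂ᴴ ΔA X̃₁)` with
`Fᵢⱼ = (λ̃ⱼ - λ_{r+i})⁻¹`; consequently, with QR decompositions
`V₂ = Q_{V₂} R_{V₂}` and `X̃₁ = Q_{X̃₁} R_{X̃₁}`,
`Q_{V₂}ᴴ Q_{X̃₁} = (R_{V₂}⁻¹)ᴴ (F ∘ (V₂ᴴ ΔA X̃₁)) R_{X̃₁}⁻¹`. -/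
theorem hadamard_QR_identity {r s : ℕ}
    (A At DA X Xt : Matrix (Fin r ⊕ Fin s) (Fin r ⊕ Fin s) ℂ)
    (lam lamt : Fin r ⊕ Fin s → ℂ)
    (hX : IsUnit X.det) (hXt : IsUnit Xt.det)
    (hA : A = X * diagonal lam * X⁻¹)
    (hAt : At = Xt * diagonal lamt * Xt⁻¹)
    (hDA : At = A + DA)
    (hnz : ∀ (j : Fin r) (i : Fin s), lamt (Sum.inl j) - lam (Sum.inr i) ≠ 0)
    (V2 : Matrix (Fin r ⊕ Fin s) (Fin s) ℂ) (hV2 : V2 = (X⁻¹)ᴴ.submatrix id Sum.inr)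
    (Xt1 : Matrix (Fin r ⊕ Fin s) (Fin r) ℂ) (hXt1 : Xt1 = Xt.submatrix id Sum.inl)
    (F : Matrix (Fin s) (Fin r) ℂ)
    (hF : F = Matrix.of fun i j => (lamt (Sum.inl j) - lam (Sum.inr i))⁻¹)
    -- QR decompositions with orthonormal `Q` factors and invertible triangular `R` factors
    (QV2 : Matrix (Fin r ⊕ Fin s) (Fin s) ℂ) (RV2 : Matrix (Fin s) (Fin s) ℂ)
    (hQRV2 : V2 = QV2 * RV2) (hQV2 : QV2ᴴ * QV2 = 1) (hRV2 : IsUnit RV2.det)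
    (hRV2tri : RV2.BlockTriangular id)
    (QXt1 : Matrix (Fin r ⊕ Fin s) (Fin r) ℂ) (RXt1 : Matrix (Fin r) (Fin r) ℂ)
    (hQRXt1 : Xt1 = QXt1 * RXt1) (hQXt1 : QXt1ᴴ * QXt1 = 1) (hRXt1 : IsUnit RXt1.det)
    (hRXt1tri : RXt1.BlockTriangular id) :
    V2ᴴ * Xt1 = F ⊙ (V2ᴴ * DA * Xt1) ∧
      QV2ᴴ * QXt1 = (RV2⁻¹)ᴴ * (F ⊙ (V2ᴴ * DA * Xt1)) * RXt1⁻¹ := by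

  have hXinvA : X⁻¹ * A = diagonal lam * X⁻¹ := by
    rw [hA, ← mul_assoc, ← mul_assoc, Matrix.nonsing_inv_mul _ hX, one_mul]
  have hAtXt : At * Xt = Xt * diagonal lamt := by
    rw [hAt, mul_assoc, Matrix.nonsing_inv_mul _ hXt, mul_one]
  have hV2H : ∀ i k, V2ᴴ i k = X⁻¹ (Sum.inr i) k := by
    intro i k; simp [hV2, Matrix.conjTranspose_apply, Matrix.submatrix_apply]
  have hV2A : ∀ i k, (V2ᴴ * A) i k = lam (Sum.inr i) * V2ᴴ i k := by
    intro i k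
    have h1 : (V2ᴴ * A) i k = (X⁻¹ * A) (Sum.inr i) k := by
      simp only [Matrix.mul_apply, hV2H]
    rw [h1, hXinvA, Matrix.diagonal_mul, hV2H]
  have hAtXt1 : ∀ k j, (At * Xt1) k j = lamt (Sum.inl j) * Xt1 k j := by
    intro k j
    have h1 : (At * Xt1) k j = (At * Xt) k (Sum.inl j) := by
      simp [Matrix.mul_apply, hXt1, Matrix.submatrix_apply]
    rw [h1, hAtXt, Matrix.mul_diagonal, hXt1]
    simp [Matrix.submatrix_apply, mul_comm]
  have hkey : ∀ i j, (V2ᴴ * DA * Xt1) i j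
      = (lamt (Sum.inl j) - lam (Sum.inr i)) * (V2ᴴ * Xt1) i j := by
    intro i j
    have hDA' : DA = At - A := by rw [hDA, add_sub_cancel_left]
    have e1 : (V2ᴴ * At * Xt1) i j = lamt (Sum.inl j) * (V2ᴴ * Xt1) i j := by
      rw [Matrix.mul_assoc]
      simp only [Matrix.mul_apply, hAtXt1]
      rw [Finset.mul_sum]
      exact Finset.sum_congr rfl fun k _ => by ring
    have e2 : (V2ᴴ * A * Xt1) i j = lam (Sum.inr i) * (V2ᴴ * Xt1) i j := by
      simp only [Matrix.mul_apply, hV2A]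
      rw [Finset.mul_sum]
      exact Finset.sum_congr rfl fun k _ => by ring
    have : V2ᴴ * DA * Xt1 = V2ᴴ * At * Xt1 - V2ᴴ * A * Xt1 := by
      rw [hDA', Matrix.mul_sub, Matrix.sub_mul]
    rw [this, Matrix.sub_apply, e1, e2]; ring
  have hmain : V2ᴴ * Xt1 = F ⊙ (V2ᴴ * DA * Xt1) := by
    ext i j
    rw [Matrix.hadamard_apply, hkey, hF]
    simp only [Matrix.of_apply]
    rw [← mul_assoc, inv_mul_cancel₀ (hnz j i), one_mul]
  refine ⟨hmain, ?_⟩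
  have hQV2' : QV2 = V2 * RV2⁻¹ := by
    rw [hQRV2, Matrix.mul_assoc, Matrix.mul_nonsing_inv _ hRV2, Matrix.mul_one]
  have hQXt1' : QXt1 = Xt1 * RXt1⁻¹ := by
    rw [hQRXt1, Matrix.mul_assoc, Matrix.mul_nonsing_inv _ hRXt1, Matrix.mul_one]
  rw [hQV2', hQXt1', Matrix.conjTranspose_mul, ← hmain]
  simp only [Matrix.mul_assoc]
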